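/- arXiv:1902.00990 — 7 statements merged into one kernel-verified Lean document; each statement's English description precedes it below -/
import Mathlib

section
/- Let g : Q → E* be an operator that is ν-Hölder continuous, i.e. ‖g(x) − g(y)‖_* ≤ L_ν ‖x − y‖^ν for all x, y ∈ Q, with ν ∈ [0,1]. Then for every δ > 0 and all x, y, z ∈ Q, ⟨g(z) − g(y), z − x⟩ ≤ (L(δ)/2)‖z − x‖² + (L(δ)/2)‖z − y‖² + δ, where L(δ) = (1/(2δ))^{(1−ν)/(1+ν)} · L_ν^{2/(1+ν)}. -/
/-!
By Cauchy–Schwarz and Hölder continuity, `⟪g z - g y, z - x⟫ ≤ Lν a^ν b` with `a = ‖z - y‖` and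
`b = ‖z - x‖`. The constant `L = L(δ)` is chosen so that `L^(1+ν) (2δ)^(1-ν) = Lν²`; hence
`(Lν a^ν)² = L · (L a²)^ν (2δ)^(1-ν) ≤ L (L a² + 2δ)` by the weighted AM–GM inequality with
weights `ν, 1 - ν`, and `2L · Lν a^ν b ≤ (Lν a^ν)² + L² b²` finishes the proof.
-/

open RealInnerProductSpace Set

noncomputable def holderSmoothingConstant (ν M δ : ℝ) : ℝ :=
  (1 / (2 * δ)) ^ ((1 - ν) / (1 + ν)) * M ^ ((2 : ℝ) / (1 + ν))

namespace holderSmoothingConstant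

variable {ν M δ : ℝ}

lemma pos (hM : 0 < M) (hδ : 0 < δ) : 0 < holderSmoothingConstant ν M δ := by
  unfold holderSmoothingConstant
  positivity

lemma rpow_one_add_mul_rpow_one_sub (hν : 0 ≤ ν) (hM : 0 ≤ M) (hδ : 0 < δ) :
    holderSmoothingConstant ν M δ ^ (1 + ν) * (2 * δ) ^ (1 - ν) = M ^ 2 := by
  have h1ν : (1 + ν) ≠ 0 := by positivity
  rw [holderSmoothingConstant, Real.mul_rpow (by positivity) (by positivity),
    ← Real.rpow_mul (by positivity), ← Real.rpow_mul hM, div_mul_cancel₀ _ h1ν,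
    div_mul_cancel₀ _ h1ν, one_div, Real.inv_rpow (by positivity), Real.rpow_two]
  field_simp

lemma sq_mul_rpow_le (hν : ν ∈ Icc 0 1) (hM : 0 < M) (hδ : 0 < δ) {a : ℝ} (ha : 0 ≤ a) :
    (M * a ^ ν) ^ 2 ≤
      holderSmoothingConstant ν M δ * (holderSmoothingConstant ν M δ * a ^ 2 + 2 * δ) := by
  set L := holderSmoothingConstant ν M δ
  have hL : 0 < L := pos hM hδ
  have amgm : (L * a ^ 2) ^ ν * (2 * δ) ^ (1 - ν) ≤ ν * (L * a ^ 2) + (1 - ν) * (2 * δ) :=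
    Real.geom_mean_le_arith_mean2_weighted hν.1 (sub_nonneg.mpr hν.2) (by positivity)
      (by positivity) (by ring)
  have hsq : (M * a ^ ν) ^ 2 = L * ((L * a ^ 2) ^ ν * (2 * δ) ^ (1 - ν)) := by
    rw [mul_pow, ← rpow_one_add_mul_rpow_one_sub hν.1 hM.le hδ, Real.rpow_add hL,
      Real.rpow_one, Real.mul_rpow hL.le (by positivity), ← Real.rpow_natCast,
      ← Real.rpow_mul ha, ← Real.rpow_natCast a, ← Real.rpow_mul ha, mul_comm ν]
    ring
  calc (M * a ^ ν) ^ 2 ≤ L * (ν * (L * a ^ 2) + (1 - ν) * (2 * δ)) := by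
        rw [hsq]; gcongr
    _ ≤ L * (L * a ^ 2 + 2 * δ) := by
        refine mul_le_mul_of_nonneg_left ?_ hL.le
        nlinarith [hν.1, hν.2, mul_nonneg hL.le (sq_nonneg a)]

theorem mul_rpow_mul_le (hν : ν ∈ Icc 0 1) (hM : 0 < M) (hδ : 0 < δ) {a b : ℝ}
    (ha : 0 ≤ a) :
    M * a ^ ν * b ≤
      holderSmoothingConstant ν M δ / 2 * b ^ 2 + holderSmoothingConstant ν M δ / 2 * a ^ 2
        + δ := by
  set L := holderSmoothingConstant ν M δ
  have hL : 0 < L := pos hM hδ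
  have key := sq_mul_rpow_le hν hM hδ ha
  have h2L : 2 * L * (M * a ^ ν * b) ≤ 2 * L * (L / 2 * b ^ 2 + L / 2 * a ^ 2 + δ) := by
    nlinarith [sq_nonneg (M * a ^ ν - L * b)]
  exact le_of_mul_le_mul_left h2L (by positivity)

end holderSmoothingConstant

/-- Hölder interpolation inequality for a `ν`-Hölder continuous operator:
for every `δ > 0`, `⟪g z - g y, z - x⟫ ≤ (L(δ)/2)‖z - x‖² + (L(δ)/2)‖z - y‖² + δ`
with `L(δ) = (1/(2δ))^((1-ν)/(1+ν)) · Lν^(2/(1+ν))`. -/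
theorem holder_interpolation
    {E : Type*} [NormedAddCommGroup E] [InnerProductSpace ℝ E]
    (Q : Set E) (g : E → E) (ν Lν : ℝ) (hν : ν ∈ Set.Icc (0 : ℝ) 1) (hLν : 0 < Lν)
    (hhold : ∀ x ∈ Q, ∀ y ∈ Q, ‖g x - g y‖ ≤ Lν * ‖x - y‖ ^ ν) :
    ∀ δ > (0 : ℝ), ∀ x ∈ Q, ∀ y ∈ Q, ∀ z ∈ Q,
      ⟪g z - g y, z - x⟫ ≤
        (1 / (2 * δ)) ^ ((1 - ν) / (1 + ν)) * Lν ^ ((2 : ℝ) / (1 + ν)) / 2 * ‖z - x‖ ^ 2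
        + (1 / (2 * δ)) ^ ((1 - ν) / (1 + ν)) * Lν ^ ((2 : ℝ) / (1 + ν)) / 2 * ‖z - y‖ ^ 2
        + δ := by
  intro δ hδ x hx y hy z hz
  calc ⟪g z - g y, z - x⟫ ≤ ‖g z - g y‖ * ‖z - x‖ := real_inner_le_norm _ _
    _ ≤ Lν * ‖z - y‖ ^ ν * ‖z - x‖ := by gcongr; exact hhold z hz y hy
    _ ≤ _ := holderSmoothingConstant.mul_rpow_mul_le hν hLν hδ (norm_nonneg _)
end

section
/- Let ψ : Q → ℝ be convex, d : Q → ℝ be convex differentiable with Bregman divergence V, β ≥ 0, and let y ∈ Q be a δ̃-approximate minimizer of x ↦ ψ(x) + β·V[z](x) over Q in the sense that there exists a subgradient h of this function at y with ⟨h, x − y⟩ ≥ −δ̃ for all x ∈ Q. Then for all x ∈ Q: ψ(x) + β·V[z](x) ≥ ψ(y) + β·V[z](y) + β·V[y](x) − δ̃. -/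
open RealInnerProductSpace

/-! The three-point identity `V[z](x) - V[z](y) - V[y](x) = ⟪∇d(y) - ∇d(z), x - y⟫` turns the
variational inequality for `ψ + β V[z]` at `y` into the claim once `ψ x - ψ y` is bounded below
by the subgradient inequality. -/

section Bregman

variable {E : Type*} [SeminormedAddCommGroup E] [InnerProductSpace ℝ E]

def bregmanDiv (d : E → ℝ) (d' : E → E) (z x : E) : ℝ :=
  d x - d z - ⟪d' z, x - z⟫

theorem bregmanDiv_three_point (d : E → ℝ) (d' : E → E) (z y x : E) :
    bregmanDiv d d' z x - bregmanDiv d d' z y - bregmanDiv d d' y x = ⟪d' y - d' z, x - y⟫ := by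
  simp only [bregmanDiv, inner_sub_left, inner_sub_right]
  ring

end Bregman

theorem inexact_mirror_step_general
    {E : Type*} [NormedAddCommGroup E] [InnerProductSpace ℝ E]
    (Q : Set E)
    (ψ d : E → ℝ) (d' : E → E)
    (V : E → E → ℝ)
    (hV : ∀ z x, V z x = d x - d z - ⟪d' z, x - z⟫)
    (β : ℝ) (δt : ℝ)
    (z : E) (y : E)
    (happrox : ∃ g : E,
      (∀ x ∈ Q, ⟪g, x - y⟫ ≤ ψ x - ψ y) ∧
      (∀ x ∈ Q, ⟪g + β • (d' y - d' z), x - y⟫ ≥ -δt)) :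
    ∀ x ∈ Q, ψ x + β * V z x ≥ ψ y + β * V z y + β * V y x - δt := by
  intro x hx
  obtain ⟨g, hsubgrad, hvar⟩ := happrox
  have hVdef : V = bregmanDiv d d' := funext₂ hV
  have hsub := hsubgrad x hx
  have hvi := hvar x hx
  rw [inner_add_left, real_inner_smul_left, ← bregmanDiv_three_point, ← hVdef] at hvi
  linarith

/-- if `y` is a `δ̃`-approximate minimizer of `x ↦ ψ x + β V[z] x` over `Q`
(in the variational-inequality sense, witnessed by a subgradient `g` of `ψ` at `y`),
then `ψ x + β V[z] x ≥ ψ y + β V[z] y + β V[y] x - δ̃` for all `x ∈ Q`. -/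
theorem inexact_mirror_step
    {E : Type*} [NormedAddCommGroup E] [InnerProductSpace ℝ E] [CompleteSpace E]
    (Q : Set E) (hQ : Convex ℝ Q)
    (ψ d : E → ℝ) (d' : E → E)
    (hψconv : ConvexOn ℝ Q ψ)
    (hdconv : ConvexOn ℝ Q d)
    (hddiff : ∀ x ∈ Q, HasGradientAt d (d' x) x)
    (V : E → E → ℝ)
    (hV : ∀ z x, V z x = d x - d z - ⟪d' z, x - z⟫)
    (β : ℝ) (hβ : 0 ≤ β) (δt : ℝ) (hδt : 0 ≤ δt)
    (z : E) (hz : z ∈ Q) (y : E) (hy : y ∈ Q)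
    (happrox : ∃ g : E,
      (∀ x ∈ Q, ⟪g, x - y⟫ ≤ ψ x - ψ y) ∧
      (∀ x ∈ Q, ⟪g + β • (d' y - d' z), x - y⟫ ≥ -δt)) :
    ∀ x ∈ Q, ψ x + β * V z x ≥ ψ y + β * V z y + β * V y x - δt :=
  inexact_mirror_step_general Q ψ d d' V hV β δt z y happrox
end

section
/- Let (α_k) be a sequence with α_0 = 0, A_k = Σ_{i=0}^k α_i, and A_k = L_k α_k² for all k ≥ 1, where 0 < L_k ≤ 2L for all k, and for k ≥ 1 each α_{k+1} is the largest root of L_{k+1}α² − α − A_k = 0. Then A_k ≥ (k+1)²/(8L) for all k ≥ 1. -/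
/-- growth of the FGM coefficients: with `α 0 = 0`, `A 0 = 0`,
`α 1 = 1 / L 1`, `α (k+1)` the largest root of `L (k+1) α² - α - A k = 0`,
`A (k+1) = A k + α (k+1)` and `0 < L k ≤ 2 L`, one has `A k ≥ (k+1)² / (8 L)`
for all `k ≥ 1`. -/
theorem fgm_coefficient_growth
    (L : ℝ) (hL : 0 < L)
    (α A Lk : ℕ → ℝ)
    (hLk : ∀ k : ℕ, 0 < Lk (k + 1) ∧ Lk (k + 1) ≤ 2 * L)
    (hα0 : α 0 = 0) (hA0 : A 0 = 0)
    (hα1 : α 1 = 1 / Lk 1)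
    (hαrec : ∀ k : ℕ, 1 ≤ k →
      α (k + 1) = (1 + Real.sqrt (1 + 4 * Lk (k + 1) * A k)) / (2 * Lk (k + 1)))
    (hArec : ∀ k : ℕ, A (k + 1) = A k + α (k + 1)) :
    ∀ k : ℕ, 1 ≤ k → A k ≥ ((k : ℝ) + 1) ^ 2 / (8 * L) := by
  intro k hk
  induction k with
  | zero => omega
  | succ n ih =>
    obtain ⟨hLpos, hLle⟩ := hLk n
    rcases Nat.eq_zero_or_pos n with hn | hn
    · subst hn
      have h1 : A 1 = 1 / Lk 1 := by rw [hArec 0, hA0, hα1]; ring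
      rw [h1]
      push_cast
      rw [ge_iff_le, div_le_div_iff₀ (by positivity) hLpos]
      nlinarith
    · have hA := ih hn
      have hApos : 0 < A n := lt_of_lt_of_le (by positivity) hA
      set L' := Lk (n + 1) with hL'
      set s := Real.sqrt (L' * A n) with hs
      set t := Real.sqrt (1 + 4 * L' * A n) with ht
      have hts : 2 * s ≤ t := by
        have : Real.sqrt (4 * (L' * A n)) ≤ t := by
          apply Real.sqrt_le_sqrt; nlinarith
        calc 2 * s = Real.sqrt (4 * (L' * A n)) := by
              rw [show (4 : ℝ) = 2 ^ 2 by norm_num, Real.sqrt_mul (by positivity),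
                Real.sqrt_sq (by norm_num)]
          _ ≤ t := this
      have hslb : L' * ((n : ℝ) + 1) / (4 * L) ≤ s := by
        rw [hs, show L' * ((n : ℝ) + 1) / (4 * L) = Real.sqrt ((L' * ((n : ℝ) + 1) / (4 * L)) ^ 2)
          from (Real.sqrt_sq (by positivity)).symm]
        apply Real.sqrt_le_sqrt
        have h1 : ((n : ℝ) + 1) ^ 2 / (8 * L) ≤ A n := hA
        have h2 : L' ≤ 2 * L := hLle
        rw [div_pow, div_le_iff₀ (by positivity)]
        rw [div_le_iff₀ (by positivity : (0:ℝ) < 8 * L)] at h1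
        nlinarith [mul_le_mul_of_nonneg_left h1 (sq_nonneg L'),
          mul_le_mul_of_nonneg_right h2
            (by positivity : (0:ℝ) ≤ L' * (8 * L * A n)), sq_nonneg L']
      have hαval := hαrec n hn
      have hAn1 : A (n + 1) = A n + (1 + t) / (2 * L') := by
        rw [hArec n, hαval]
      rw [hAn1]
      push_cast
      have key : ((n : ℝ) + 2) ^ 2 / (8 * L) ≤ A n + (1 + t) / (2 * L') := by
        have step1 : ((n : ℝ) + 2) ^ 2 / (8 * L) ≤
            ((n : ℝ) + 1) ^ 2 / (8 * L) + 1 / (4 * L) + ((n : ℝ) + 1) / (4 * L) := by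
          rw [div_add_div _ _ (by positivity) (by positivity),
            div_add_div _ _ (by positivity) (by positivity)]
          rw [div_le_div_iff₀ (by positivity) (by positivity)]
          ring_nf
          nlinarith [hL.le, pow_pos hL 3, sq_nonneg ((n:ℝ)+1)]
        have step2 : (1 : ℝ) / (4 * L) ≤ 1 / (2 * L') := by
          apply one_div_le_one_div_of_le (by positivity); linarith
        have step3 : ((n : ℝ) + 1) / (4 * L) ≤ s / L' := by
          rw [div_le_div_iff₀ (by positivity) hLpos]
          calc ((n:ℝ)+1) * L' = (L' * ((n:ℝ)+1) / (4*L)) * (4*L) := by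
                field_simp
            _ ≤ s * (4 * L) := by
                apply mul_le_mul_of_nonneg_right hslb (by positivity)
        have step4 : A n + (1 + 2 * s) / (2 * L') ≤ A n + (1 + t) / (2 * L') := by
          have : (1 + 2 * s) / (2 * L') ≤ (1 + t) / (2 * L') := by
            gcongr
          linarith
        have heq : A n + (1 + 2 * s) / (2 * L') = A n + 1 / (2 * L') + s / L' := by
          field_simp; ring
        linarith [hA]
      rw [ge_iff_le, show ((n:ℝ) + 1 + 1) = (n:ℝ) + 2 from by ring]
      exact key
end

section
/- Under the assumptions of the gradient method with exact (δ,L)-model steps of constant stepsize 1/L (per-step inequality f(x_{k+1}) − f(x) ≤ L(V[x_k](x) − V[x_{k+1}](x)) + 2δ for all x ∈ Q), if V[x_0](x_*) ≤ R² for a minimizer x_*, then the average point x̄_N = (1/N) Σ_{k=0}^{N−1} x_{k+1} satisfies f(x̄_N) − f(x_*) ≤ L R² / N + 2δ. -/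
/-- convergence of the gradient method with constant stepsize `1/L`:
from the per-step inequality, `f x̄_N - f x_* ≤ L R² / N + 2δ` for the averaged point. -/
theorem gradient_method_rate
    {E : Type*} [NormedAddCommGroup E] [NormedSpace ℝ E]
    (Q : Set E) (hQ : Convex ℝ Q)
    (f : E → ℝ) (hconv : ConvexOn ℝ Q f)
    (V : E → E → ℝ) (hVnonneg : ∀ z x, 0 ≤ V z x)
    (L δ R : ℝ) (hL : 0 < L) (hδ : 0 ≤ δ) (hR : 0 ≤ R)
    (xstar : E) (hxstar : xstar ∈ Q) (hmin : IsMinOn f Q xstar)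
    (x : ℕ → E) (hx : ∀ k, x k ∈ Q)
    (N : ℕ) (hN : 0 < N)
    (hstep : ∀ k < N, ∀ u ∈ Q,
      f (x (k + 1)) - f u ≤ L * (V (x k) u - V (x (k + 1)) u) + 2 * δ)
    (hR2 : V (x 0) xstar ≤ R ^ 2) :
    f ((1 / (N : ℝ)) • ∑ k ∈ Finset.range N, x (k + 1)) - f xstar
      ≤ L * R ^ 2 / N + 2 * δ := by
  have hNpos : (0:ℝ) < N := by exact_mod_cast hN
  -- telescoping sum
  have hsum : ∑ k ∈ Finset.range N, (f (x (k + 1)) - f xstar)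
      ≤ L * R ^ 2 + N * (2 * δ) := by
    calc ∑ k ∈ Finset.range N, (f (x (k + 1)) - f xstar)
        ≤ ∑ k ∈ Finset.range N,
            (L * (V (x k) xstar - V (x (k + 1)) xstar) + 2 * δ) :=
          Finset.sum_le_sum fun k hk =>
            hstep k (Finset.mem_range.mp hk) xstar hxstar
      _ = L * (V (x 0) xstar - V (x N) xstar) + N * (2 * δ) := by
          rw [Finset.sum_add_distrib, ← Finset.mul_sum,
            Finset.sum_range_sub' (fun k => V (x k) xstar)]
          simp [mul_comm]
      _ ≤ L * R ^ 2 + N * (2 * δ) := by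
          have := hVnonneg (x N) xstar
          nlinarith
  -- Jensen
  have hjensen : f ((1 / (N : ℝ)) • ∑ k ∈ Finset.range N, x (k + 1))
      ≤ ∑ k ∈ Finset.range N, (1 / (N : ℝ)) * f (x (k + 1)) := by
    have := hconv.map_sum_le (t := Finset.range N) (w := fun _ => 1 / (N : ℝ))
      (p := fun k => x (k + 1))
      (fun i _ => by positivity)
      (by rw [Finset.sum_const, Finset.card_range, nsmul_eq_mul]; exact mul_one_div_cancel hNpos.ne')
      (fun i _ => hx (i + 1))
    simpa [Finset.smul_sum, smul_comm] using this
  have hsum' : ∑ k ∈ Finset.range N, (1 / (N : ℝ)) * f (x (k + 1))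
      = (1 / (N : ℝ)) * ∑ k ∈ Finset.range N, f (x (k + 1)) := by
    rw [Finset.mul_sum]
  have hfsum : ∑ k ∈ Finset.range N, f (x (k + 1))
      ≤ L * R ^ 2 + N * (2 * δ) + N * f xstar := by
    have : ∑ k ∈ Finset.range N, (f (x (k + 1)) - f xstar)
        = ∑ k ∈ Finset.range N, f (x (k + 1)) - N * f xstar := by
      rw [Finset.sum_sub_distrib]; simp [mul_comm]
    linarith [hsum, this ▸ hsum]
  have := hjensen.trans (le_of_eq hsum')
  have key : (1 / (N : ℝ)) * ∑ k ∈ Finset.range N, f (x (k + 1))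
      ≤ (1 / (N : ℝ)) * (L * R ^ 2 + N * (2 * δ) + N * f xstar) :=
    mul_le_mul_of_nonneg_left hfsum (by positivity)
  have hEq : (1 / (N : ℝ)) * (L * R ^ 2 + N * (2 * δ) + N * f xstar)
      = L * R ^ 2 / N + 2 * δ + f xstar := by
    field_simp
  linarith [this.trans key]
end

section
/- In the generalized Mirror Prox setting, suppose for each k = 0,...,N−1 and every u ∈ Q: −ψ_δ(u, w_k) ≤ L_{k+1}(V[z_k](u) − V[z_{k+1}](u)) + δ, with 0 < L_{k+1} ≤ 2L. Let S_N = Σ_{k=0}^{N−1} 1/L_{k+1} and ŵ_N = (1/S_N) Σ_{k=0}^{N−1} w_k / L_{k+1}. Then using abstract δ-monotonicity ψ_δ(x,y) + ψ_δ(y,x) ≤ δ and convexity of ψ_δ in its first argument: max_{u∈Q} ψ_δ(ŵ_N, u) ≤ (2L · max_{u∈Q} V[z_0](u)) / N + 2δ. -/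
/-- rate of generalized Mirror Prox: from the per-step inequalities,
for the weighted average `ŵ_N` one has
`max_{u ∈ Q} ψ ŵ_N u ≤ 2 L max_{u ∈ Q} V[z_0] u / N + 2δ`. -/
theorem mirror_prox_rate
    {E : Type*} [NormedAddCommGroup E] [NormedSpace ℝ E]
    (Q : Set E) (hQ : Convex ℝ Q) (hQc : IsCompact Q)
    (ψ : E → E → ℝ)
    (V : E → E → ℝ) (hVnonneg : ∀ z x, 0 ≤ V z x)
    (L δ : ℝ) (hL : 0 < L) (hδ : 0 ≤ δ)
    (hψconv : ∀ y ∈ Q, ConvexOn ℝ Q fun x => ψ x y)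
    (hψzero : ∀ x ∈ Q, ψ x x = 0)
    (hψmono : ∀ x ∈ Q, ∀ y ∈ Q, ψ x y + ψ y x ≤ δ)
    (z w : ℕ → E) (hz : ∀ k, z k ∈ Q) (hw : ∀ k, w k ∈ Q)
    (Lk : ℕ → ℝ) (hLk : ∀ k, 0 < Lk (k + 1) ∧ Lk (k + 1) ≤ 2 * L)
    (N : ℕ) (hN : 0 < N)
    (hstep : ∀ k < N, ∀ u ∈ Q,
      -ψ u (w k) ≤ Lk (k + 1) * (V (z k) u - V (z (k + 1)) u) + δ)
    (D : ℝ) (hD : IsGreatest ((fun u => V (z 0) u) '' Q) D) :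
    ∀ u ∈ Q,
      ψ ((1 / ∑ k ∈ Finset.range N, 1 / Lk (k + 1)) •
          ∑ k ∈ Finset.range N, (1 / Lk (k + 1)) • w k) u
        ≤ 2 * L * D / N + 2 * δ := by
  intro u hu
  set S : ℝ := ∑ k ∈ Finset.range N, 1 / Lk (k + 1) with hSdef
  have hSpos : 0 < S := Finset.sum_pos
    (fun k _ => div_pos one_pos (hLk k).1) ⟨0, Finset.mem_range.mpr hN⟩
  have hDnonneg : 0 ≤ D := by
    obtain ⟨u0, hu0, h⟩ := hD.1
    exact h ▸ hVnonneg _ _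
  -- S ≥ N / (2L)
  have hSge : (N : ℝ) / (2 * L) ≤ S := by
    have : ∀ k ∈ Finset.range N, 1 / (2 * L) ≤ 1 / Lk (k + 1) := fun k _ =>
      one_div_le_one_div_of_le (hLk k).1 (hLk k).2
    calc (N : ℝ) / (2 * L) = ∑ k ∈ Finset.range N, 1 / (2 * L) := by
          rw [Finset.sum_const, Finset.card_range, nsmul_eq_mul, mul_one_div]
      _ ≤ S := Finset.sum_le_sum this
  -- Jensen
  have hcm : (1 / S) • ∑ k ∈ Finset.range N, (1 / Lk (k + 1)) • w k
      = (Finset.range N).centerMass (fun k => 1 / Lk (k + 1)) w := by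
    rw [Finset.centerMass, one_div, hSdef]
  have hJ := (hψconv u hu).map_centerMass_le (t := Finset.range N)
    (w := fun k => 1 / Lk (k + 1)) (p := w)
    (fun k _ => le_of_lt (div_pos one_pos (hLk k).1)) (hSdef ▸ hSpos)
    (fun k _ => hw k)
  rw [← hcm] at hJ
  refine hJ.trans ?_
  -- bound the centerMass of values
  have hterm : ∀ k ∈ Finset.range N,
      (1 / Lk (k + 1)) * ψ (w k) u
        ≤ (V (z k) u - V (z (k + 1)) u) + (1 / Lk (k + 1)) * (2 * δ) := by
    intro k hk
    have hLkpos := (hLk k).1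
    have h1 : ψ (w k) u ≤ δ - ψ u (w k) := by
      have := hψmono (w k) (hw k) u hu
      linarith
    have h2 := hstep k (Finset.mem_range.mp hk) u hu
    have h3 : ψ (w k) u ≤ Lk (k + 1) * (V (z k) u - V (z (k + 1)) u) + 2 * δ := by
      linarith
    have h4 : (1 / Lk (k + 1)) * ψ (w k) u
        ≤ (1 / Lk (k + 1)) * (Lk (k + 1) * (V (z k) u - V (z (k + 1)) u) + 2 * δ) :=
      mul_le_mul_of_nonneg_left h3 (le_of_lt (div_pos one_pos hLkpos))
    calc (1 / Lk (k + 1)) * ψ (w k) u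
        ≤ (1 / Lk (k + 1)) * (Lk (k + 1) * (V (z k) u - V (z (k + 1)) u) + 2 * δ) := h4
      _ = (V (z k) u - V (z (k + 1)) u) + (1 / Lk (k + 1)) * (2 * δ) := by
          field_simp
  have hsum : ∑ k ∈ Finset.range N, (1 / Lk (k + 1)) * ψ (w k) u ≤ D + S * (2 * δ) := by
    calc ∑ k ∈ Finset.range N, (1 / Lk (k + 1)) * ψ (w k) u
        ≤ ∑ k ∈ Finset.range N,
            ((V (z k) u - V (z (k + 1)) u) + (1 / Lk (k + 1)) * (2 * δ)) :=
          Finset.sum_le_sum hterm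
      _ = (V (z 0) u - V (z N) u) + S * (2 * δ) := by
          rw [Finset.sum_add_distrib, Finset.sum_range_sub' (fun k => V (z k) u),
            ← Finset.sum_mul, hSdef]
      _ ≤ D + S * (2 * δ) := by
          have hVD : V (z 0) u ≤ D := hD.2 ⟨u, hu, rfl⟩
          have := hVnonneg (z N) u
          linarith
  have hcmval : (Finset.range N).centerMass (fun k => 1 / Lk (k + 1))
      ((fun x => ψ x u) ∘ w) = S⁻¹ * ∑ k ∈ Finset.range N, (1 / Lk (k + 1)) * ψ (w k) u := by
    rw [Finset.centerMass, hSdef, smul_eq_mul]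
    simp [smul_eq_mul, Function.comp]
  rw [hcmval]
  have hstep2 : S⁻¹ * ∑ k ∈ Finset.range N, (1 / Lk (k + 1)) * ψ (w k) u
      ≤ S⁻¹ * (D + S * (2 * δ)) :=
    mul_le_mul_of_nonneg_left hsum (le_of_lt (inv_pos.mpr hSpos))
  refine hstep2.trans ?_
  have heq : S⁻¹ * (D + S * (2 * δ)) = D / S + 2 * δ := by
    field_simp
  rw [heq]
  have hdiv : D / S ≤ 2 * L * D / N := by
    have hNL : 0 < (N : ℝ) / (2 * L) := by positivity
    have := div_le_div_of_nonneg_left hDnonneg hNL hSge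
    calc D / S ≤ D / ((N : ℝ) / (2 * L)) := this
      _ = 2 * L * D / N := by field_simp
  linarith
end

section
/- Let g : Q → E* be monotone and ν-Hölder continuous with constant L_ν. Then ψ_δ(x, y) := ⟨g(y), x − y⟩ is a (δ, L(δ))-model for the variational inequality with L(δ) = (1/(2δ))^{(1−ν)/(1+ν)} L_ν^{2/(1+ν)}: it is linear (hence convex) in x, vanishes at x = y, satisfies ψ_δ(x,y) + ψ_δ(y,x) = ⟨g(y) − g(x), x − y⟩ ≤ 0 ≤ δ by monotonicity, and satisfies the generalized relative smoothness inequality ψ_δ(x,y) ≤ ψ_δ(x,z) + ψ_δ(z,y) + (L(δ)/2)‖x − z‖² + (L(δ)/2)‖z − y‖² + δ for all x, y, z ∈ Q. -/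
open RealInnerProductSpace

/-! The model `ψ(x, y) = ⟪g y, x - y⟫` is affine in `x`, and
`ψ(x, y) + ψ(y, x) = -⟪g x - g y, x - y⟫ ≤ 0` by monotonicity. For relative smoothness, the
three-point identity `ψ(x, y) - ψ(x, z) - ψ(z, y) = ⟪g y - g z, x - z⟫` and Hölder continuity
reduce everything to the scalar bound `Lν a^ν b ≤ L/2 b² + L/2 a² + δ` with `L = L(δ)`.
By Young's inequality it suffices that `(Lν a^ν)² ≤ L² a² + 2 L δ`, which is weighted AM-GM
for `L² a²` and `2 L δ` with weights `ν` and `1 - ν`: the constant `L(δ)` is exactly the one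
with `L(δ)^(1+ν) (2δ)^(1-ν) = Lν²`. -/

noncomputable def holderModelConst (δ ν Lν : ℝ) : ℝ :=
  (1 / (2 * δ)) ^ ((1 - ν) / (1 + ν)) * Lν ^ ((2 : ℝ) / (1 + ν))

section Interpolation

variable {δ ν Lν : ℝ}

lemma holderModelConst_pos (hδ : 0 < δ) (hLν : 0 < Lν) : 0 < holderModelConst δ ν Lν := by
  unfold holderModelConst
  positivity

lemma holderModelConst_rpow_mul (hδ : 0 < δ) (hν : 0 ≤ ν) (hLν : 0 < Lν) :
    holderModelConst δ ν Lν ^ (1 + ν) * (2 * δ) ^ (1 - ν) = Lν ^ 2 := by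
  have h1ν : 1 + ν ≠ 0 := by positivity
  rw [holderModelConst, Real.mul_rpow (by positivity) (by positivity),
    ← Real.rpow_mul (by positivity), ← Real.rpow_mul hLν.le,
    div_mul_cancel₀ _ h1ν, div_mul_cancel₀ _ h1ν, one_div, Real.inv_rpow (by positivity),
    Real.rpow_two]
  have : 0 < (2 * δ) ^ (1 - ν) := by positivity
  field_simp

lemma sq_mul_rpow_le (hδ : 0 < δ) (hν : ν ∈ Set.Icc (0 : ℝ) 1) (hLν : 0 < Lν) {a : ℝ}
    (ha : 0 ≤ a) :
    (Lν * a ^ ν) ^ 2 ≤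
      holderModelConst δ ν Lν ^ 2 * a ^ 2 + 2 * holderModelConst δ ν Lν * δ := by
  obtain ⟨hν0, hν1⟩ := hν
  set L := holderModelConst δ ν Lν
  have hL : 0 < L := holderModelConst_pos hδ hLν
  have hL_rpow : L ^ (1 + ν) = (L ^ ν) ^ 2 * L ^ (1 - ν) := by
    rw [← Real.rpow_natCast, ← Real.rpow_mul hL.le, ← Real.rpow_add hL]
    ring_nf
  have hsplit : (L ^ 2 * a ^ 2) ^ ν * (2 * L * δ) ^ (1 - ν) = (Lν * a ^ ν) ^ 2 := by
    rw [Real.mul_rpow (by positivity) (by positivity), ← Real.rpow_pow_comm hL.le,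
      ← Real.rpow_pow_comm ha, show 2 * L * δ = L * (2 * δ) by ring,
      Real.mul_rpow hL.le (by positivity), mul_pow,
      ← holderModelConst_rpow_mul hδ hν0 hLν, hL_rpow]
    ring
  calc (Lν * a ^ ν) ^ 2 = (L ^ 2 * a ^ 2) ^ ν * (2 * L * δ) ^ (1 - ν) := hsplit.symm
    _ ≤ ν * (L ^ 2 * a ^ 2) + (1 - ν) * (2 * L * δ) :=
      Real.geom_mean_le_arith_mean2_weighted hν0 (by linarith) (by positivity) (by positivity)
        (by ring)
    _ ≤ L ^ 2 * a ^ 2 + 2 * L * δ := by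
      nlinarith [mul_nonneg (sub_nonneg.2 hν1) (by positivity : 0 ≤ L ^ 2 * a ^ 2),
        mul_nonneg hν0 (by positivity : 0 ≤ 2 * L * δ)]

lemma mul_rpow_mul_le_holderModelConst (hδ : 0 < δ) (hν : ν ∈ Set.Icc (0 : ℝ) 1)
    (hLν : 0 < Lν) {a b : ℝ} (ha : 0 ≤ a) :
    Lν * a ^ ν * b ≤
      holderModelConst δ ν Lν / 2 * b ^ 2 + holderModelConst δ ν Lν / 2 * a ^ 2 + δ := by
  have hL := holderModelConst_pos (ν := ν) hδ hLν
  have hsq := sq_mul_rpow_le hδ hν hLν ha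
  set L := holderModelConst δ ν Lν
  nlinarith [sq_nonneg (Lν * a ^ ν - L * b)]

end Interpolation

section InnerProduct

variable {E : Type*} [NormedAddCommGroup E] [InnerProductSpace ℝ E]

lemma convexOn_inner_sub {Q : Set E} (hQ : Convex ℝ Q) (v y : E) :
    ConvexOn ℝ Q fun x => ⟪v, x - y⟫ := by
  have hψ : (fun x => ⟪v, x - y⟫) = ⇑(innerₛₗ ℝ v) + fun _ => -⟪v, y⟫ := by
    ext x
    simp [inner_sub_right, ← sub_eq_add_neg]
  rw [hψ]
  exact ((innerₛₗ ℝ v).convexOn hQ).add_const _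

lemma inner_sub_add_inner_sub_swap (u v x y : E) :
    ⟪u, x - y⟫ + ⟪v, y - x⟫ = -⟪v - u, x - y⟫ := by
  rw [← neg_sub x y, inner_neg_right, inner_sub_left]
  ring

lemma inner_sub_eq_three_point (u v x y z : E) :
    ⟪u, x - y⟫ = ⟪v, x - z⟫ + ⟪u, z - y⟫ + ⟪u - v, x - z⟫ := by
  simp only [inner_sub_left, inner_sub_right]
  ring

lemma inner_sub_le_three_point {δ ν Lν : ℝ} (hδ : 0 < δ) (hν : ν ∈ Set.Icc (0 : ℝ) 1)
    (hLν : 0 < Lν) {u v x y z : E} (huv : ‖u - v‖ ≤ Lν * ‖z - y‖ ^ ν) :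
    ⟪u, x - y⟫ ≤ ⟪v, x - z⟫ + ⟪u, z - y⟫ + holderModelConst δ ν Lν / 2 * ‖x - z‖ ^ 2
      + holderModelConst δ ν Lν / 2 * ‖z - y‖ ^ 2 + δ := by
  have hcross : ⟪u - v, x - z⟫ ≤ Lν * ‖z - y‖ ^ ν * ‖x - z‖ :=
    (real_inner_le_norm _ _).trans (mul_le_mul_of_nonneg_right huv (norm_nonneg _))
  have := mul_rpow_mul_le_holderModelConst hδ hν hLν (b := ‖x - z‖) (norm_nonneg (z - y))
  rw [inner_sub_eq_three_point u v x y z]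
  linarith

end InnerProduct

/-- for a monotone `ν`-Hölder continuous operator `g`, the function
`ψ x y = ⟪g y, x - y⟫` is a `(δ, L(δ))`-model for the variational inequality, where
`L(δ) = (1/(2δ))^((1-ν)/(1+ν)) Lν^(2/(1+ν))`. -/
theorem holder_operator_model
    {E : Type*} [NormedAddCommGroup E] [InnerProductSpace ℝ E]
    (Q : Set E) (hQ : Convex ℝ Q)
    (g : E → E) (ν Lν : ℝ) (hν : ν ∈ Set.Icc (0 : ℝ) 1) (hLν : 0 < Lν)
    (hmono : ∀ x ∈ Q, ∀ y ∈ Q, 0 ≤ ⟪g x - g y, x - y⟫)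
    (hhold : ∀ x ∈ Q, ∀ y ∈ Q, ‖g x - g y‖ ≤ Lν * ‖x - y‖ ^ ν) :
    ∀ δ > (0 : ℝ),
      (∀ y ∈ Q, ConvexOn ℝ Q fun x => ⟪g y, x - y⟫) ∧
      (∀ x ∈ Q, ⟪g x, x - x⟫ = 0) ∧
      (∀ x ∈ Q, ∀ y ∈ Q, ⟪g y, x - y⟫ + ⟪g x, y - x⟫ ≤ δ) ∧
      (∀ x ∈ Q, ∀ y ∈ Q, ∀ z ∈ Q,
        ⟪g y, x - y⟫ ≤ ⟪g z, x - z⟫ + ⟪g y, z - y⟫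
          + (1 / (2 * δ)) ^ ((1 - ν) / (1 + ν)) * Lν ^ ((2 : ℝ) / (1 + ν)) / 2
              * ‖x - z‖ ^ 2
          + (1 / (2 * δ)) ^ ((1 - ν) / (1 + ν)) * Lν ^ ((2 : ℝ) / (1 + ν)) / 2
              * ‖z - y‖ ^ 2
          + δ) := by
  intro δ hδ
  refine ⟨fun y _ => convexOn_inner_sub hQ (g y) y, fun x _ => by simp,
    fun x hx y hy => ?_, fun x _ y hy z hz => ?_⟩
  · rw [inner_sub_add_inner_sub_swap]
    linarith [hmono x hx y hy]
  · refine inner_sub_le_three_point hδ hν hLν ?_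
    rw [norm_sub_rev z y]
    exact hhold y hy z hz
end

section
/- Let Ψ : Q → ℝ be μ-strongly convex with L-Lipschitz gradient on a convex set Q with diameter R = max_{x,y∈Q}‖x − y‖, and let x_* = argmin_{x∈Q} Ψ(x). If x̃ ∈ Q satisfies Ψ(x̃) − Ψ(x_*) ≤ ε̃, then x̃ is a δ̃-approximate solution in the variational-inequality sense (there exists h ∈ ∂Ψ(x̃) with ⟨h, x − x̃⟩ ≥ −δ̃ for all x ∈ Q) with δ̃ ≤ (L R + ‖∇Ψ(x_*)‖_*) √(2ε̃/μ); moreover if ∇Ψ(x_*) = 0 then one can take δ̃ ≤ R√(2L ε̃). -/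
open RealInnerProductSpace

set_option maxHeartbeats 1000000 in
/-- an `ε̃`-minimizer in function value of a `μ`-strongly convex function
with `L`-Lipschitz gradient over a set of diameter `R` is a `δ̃`-approximate solution in
the variational-inequality sense with `δ̃ = (L R + ‖∇Ψ x_*‖)√(2ε̃/μ)`; if moreover
`∇Ψ x_* = 0` one can take `δ̃ = R √(2 L ε̃)`. -/
theorem function_accuracy_to_vi_accuracy
    {E : Type*} [NormedAddCommGroup E] [InnerProductSpace ℝ E] [CompleteSpace E]
    (Q : Set E) (hQ : Convex ℝ Q)
    (Ψ : E → ℝ) (Ψ' : E → E) (μ L R : ℝ) (hμ : 0 < μ) (hL : 0 < L) (hR : 0 ≤ R)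
    (hsc : StrongConvexOn Q μ Ψ)
    (hdiff : ∀ x, HasGradientAt Ψ (Ψ' x) x)
    (hlip : ∀ x ∈ Q, ∀ y ∈ Q, ‖Ψ' x - Ψ' y‖ ≤ L * ‖x - y‖)
    (hdiam : ∀ x ∈ Q, ∀ y ∈ Q, ‖x - y‖ ≤ R)
    (xstar : E) (hxstar : xstar ∈ Q) (hmin : IsMinOn Ψ Q xstar)
    (εt : ℝ) (hεt : 0 ≤ εt)
    (xt : E) (hxt : xt ∈ Q) (happrox : Ψ xt - Ψ xstar ≤ εt) :
    (∃ h : E, (∀ x ∈ Q, ⟪h, x - xt⟫ ≤ Ψ x - Ψ xt) ∧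
      ∀ x ∈ Q, ⟪h, x - xt⟫ ≥ -((L * R + ‖Ψ' xstar‖) * Real.sqrt (2 * εt / μ))) ∧
    (Ψ' xstar = 0 →
      ∃ h : E, (∀ x ∈ Q, ⟪h, x - xt⟫ ≤ Ψ x - Ψ xt) ∧
        ∀ x ∈ Q, ⟪h, x - xt⟫ ≥ -(R * Real.sqrt (2 * L * εt))) := by
  -- derivative of Ψ along a line
  have hpath : ∀ (x v : E) (t : ℝ),
      HasDerivAt (fun s : ℝ => Ψ (x + s • v)) ⟪Ψ' (x + t • v), v⟫ t := by
    intro x v t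
    have h1 : HasDerivAt (fun s : ℝ => x + s • v) v t := by
      simpa using ((hasDerivAt_id t).smul_const v).const_add x
    have h2 := ((hdiff (x + t • v)).hasFDerivAt).comp_hasDerivAt t h1
    simp at h2
    exact h2
  -- descent lemma along segments of Q
  have descent : ∀ x ∈ Q, ∀ y ∈ Q, Ψ y ≤ Ψ x + ⟪Ψ' x, y - x⟫ + L / 2 * ‖y - x‖ ^ 2 := by
    intro x hx y hy
    set v := y - x with hv
    have hmem : ∀ t ∈ Set.Icc (0:ℝ) 1, x + t • v ∈ Q := by
      intro t ht
      have hrw : x + t • v = (1 - t) • x + t • y := by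
        rw [hv, smul_sub, sub_smul, one_smul]; abel
      rw [hrw]
      exact hQ hx hy (by linarith [ht.2]) ht.1 (by ring)
    set f : ℝ → ℝ := fun t => Ψ (x + t • v) - t * ⟪Ψ' x, v⟫ - L / 2 * ‖v‖ ^ 2 * t ^ 2 with hf
    have hf' : ∀ t : ℝ, HasDerivAt f
        (⟪Ψ' (x + t • v), v⟫ - ⟪Ψ' x, v⟫ - L / 2 * ‖v‖ ^ 2 * (2 * t)) t := by
      intro t
      have h1 := (hpath x v t).sub (hasDerivAt_mul_const (⟪Ψ' x, v⟫ : ℝ))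
      have h2 := (hasDerivAt_pow 2 t).const_mul (L / 2 * ‖v‖ ^ 2)
      have h3 := h1.sub h2
      convert h3 using 1
      · rfl
      · rfl
      · rfl
      push_cast
      ring
    have hanti : AntitoneOn f (Set.Icc 0 1) := by
      apply antitoneOn_of_deriv_nonpos (convex_Icc 0 1)
      · exact fun t _ => (hf' t).continuousAt.continuousWithinAt
      · exact fun t ht => ((hf' t).differentiableAt).differentiableWithinAt
      · intro t ht
        rw [interior_Icc] at ht
        rw [(hf' t).deriv]
        have hzQ : x + t • v ∈ Q := hmem t ⟨ht.1.le, ht.2.le⟩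
        have h1 : ⟪Ψ' (x + t • v), v⟫ - ⟪Ψ' x, v⟫ ≤ L * (t * ‖v‖) * ‖v‖ := by
          rw [← inner_sub_left]
          have c1 : ⟪Ψ' (x + t • v) - Ψ' x, v⟫ ≤ ‖Ψ' (x + t • v) - Ψ' x‖ * ‖v‖ :=
            real_inner_le_norm _ _
          have c2 : ‖Ψ' (x + t • v) - Ψ' x‖ ≤ L * (t * ‖v‖) := by
            have := hlip _ hzQ _ hx
            rw [add_sub_cancel_left, norm_smul, Real.norm_of_nonneg ht.1.le] at this
            linarith
          calc ⟪Ψ' (x + t • v) - Ψ' x, v⟫ ≤ ‖Ψ' (x + t • v) - Ψ' x‖ * ‖v‖ := c1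
            _ ≤ L * (t * ‖v‖) * ‖v‖ :=
              mul_le_mul_of_nonneg_right c2 (norm_nonneg v)
        nlinarith [h1]
    have h01 := hanti (Set.left_mem_Icc.2 zero_le_one) (Set.right_mem_Icc.2 zero_le_one)
      zero_le_one
    have hf0 : f 0 = Ψ x := by simp [hf]
    have hf1 : f 1 = Ψ y - ⟪Ψ' x, v⟫ - L / 2 * ‖v‖ ^ 2 := by
      simp [hf, hv]
    rw [hf0, hf1] at h01
    linarith
  -- gradient inequality from convexity
  have grad_ineq : ∀ x ∈ Q, ∀ y ∈ Q, ⟪Ψ' x, y - x⟫ ≤ Ψ y - Ψ x := by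
    intro x hx y hy
    have h0 : HasDerivAt (fun t : ℝ => Ψ (x + t • (y - x))) ⟪Ψ' x, y - x⟫ 0 := by
      simpa using hpath x (y - x) 0
    rw [hasDerivAt_iff_tendsto_slope] at h0
    have h0' : Filter.Tendsto (slope (fun t : ℝ => Ψ (x + t • (y - x))) 0) (nhdsWithin 0 (Set.Ioi 0))
        (nhds ⟪Ψ' x, y - x⟫) :=
      h0.mono_left (nhdsWithin_mono _ (fun t ht => by simpa using (ne_of_gt ht)))
    refine le_of_tendsto h0' ?_
    filter_upwards [Ioc_mem_nhdsGT (zero_lt_one)] with t ht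
    have hcomb := hsc.2 hx hy (show (0:ℝ) ≤ 1 - t by linarith [ht.2]) ht.1.le (show 1 - t + t = 1 by ring)
    have hpt : x + t • (y - x) = (1 - t) • x + t • y := by
      rw [smul_sub, sub_smul, one_smul]; abel
    have hterm : 0 ≤ (1 - t) * t * (μ / 2 * ‖x - y‖ ^ 2) := by
      have h1 : (0:ℝ) ≤ 1 - t := by linarith [ht.2]
      have h2 : (0:ℝ) ≤ t := ht.1.le
      positivity
    simp only [smul_eq_mul] at hcomb
    have hφt : Ψ (x + t • (y - x)) ≤ (1 - t) * Ψ x + t * Ψ y := by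
      rw [hpt]; linarith
    have hslope : slope (fun t : ℝ => Ψ (x + t • (y - x))) 0 t
        = (Ψ (x + t • (y - x)) - Ψ x) / t := by
      rw [slope_def_field]; simp
    rw [hslope, div_le_iff₀ ht.1]
    nlinarith [hφt]
  -- strong convexity distance bound
  have hdle : μ / 2 * ‖xt - xstar‖ ^ 2 ≤ Ψ xt - Ψ xstar := by
    have key : ∀ b ∈ Set.Ioc (0:ℝ) 1,
        (1 - b) * (μ / 2 * ‖xt - xstar‖ ^ 2) ≤ Ψ xt - Ψ xstar := by
      intro b hb
      have hcomb := hsc.2 hxstar hxt (show (0:ℝ) ≤ 1 - b by linarith [hb.2]) hb.1.le (show 1 - b + b = 1 by ring)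
      have hmem : (1 - b) • xstar + b • xt ∈ Q :=
        hQ hxstar hxt (by linarith [hb.2]) hb.1.le (by ring)
      have hge : Ψ xstar ≤ Ψ ((1 - b) • xstar + b • xt) := isMinOn_iff.1 hmin _ hmem
      simp only [smul_eq_mul] at hcomb
      have hnorm : ‖xstar - xt‖ = ‖xt - xstar‖ := norm_sub_rev _ _
      rw [hnorm] at hcomb
      have h2 : b * ((1 - b) * (μ / 2 * ‖xt - xstar‖ ^ 2)) ≤ b * (Ψ xt - Ψ xstar) := by
        nlinarith [hge, hcomb]
      exact (mul_le_mul_iff_right₀ hb.1).1 h2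
    have htend : Filter.Tendsto (fun b : ℝ => (1 - b) * (μ / 2 * ‖xt - xstar‖ ^ 2))
        (nhdsWithin 0 (Set.Ioi 0)) (nhds ((1 - 0) * (μ / 2 * ‖xt - xstar‖ ^ 2))) := by
      refine Filter.Tendsto.mono_left ?_ nhdsWithin_le_nhds
      exact (Continuous.tendsto (by continuity) 0)
    have := le_of_tendsto htend (by
      filter_upwards [Ioc_mem_nhdsGT (zero_lt_one)] with b hb using key b hb)
    simpa using this
  -- VI at the minimizer
  have hvi : ∀ x ∈ Q, 0 ≤ ⟪Ψ' xstar, x - xstar⟫ := by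
    intro x hx
    have hcone : x - xstar ∈ posTangentConeAt Q xstar :=
      sub_mem_posTangentConeAt_of_segment_subset (hQ.segment_subset hxstar hx)
    have := hmin.localize.hasFDerivWithinAt_nonneg
      ((hdiff xstar).hasFDerivAt.hasFDerivWithinAt) hcone
    simpa using this
  have hΔ0 : 0 ≤ Ψ xt - Ψ xstar := sub_nonneg.2 (isMinOn_iff.1 hmin _ hxt)
  have hdsq : ‖xt - xstar‖ ^ 2 ≤ 2 * εt / μ := by
    rw [le_div_iff₀ hμ]; nlinarith [hdle]
  have hds : ‖xt - xstar‖ ≤ Real.sqrt (2 * εt / μ) := by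
    have h1 : ‖xt - xstar‖ = Real.sqrt (‖xt - xstar‖ ^ 2) :=
      (Real.sqrt_sq (norm_nonneg _)).symm
    rw [h1]
    exact Real.sqrt_le_sqrt hdsq
  constructor
  · refine ⟨Ψ' xt, fun x hx => grad_ineq xt hxt x hx, ?_⟩
    intro x hx
    have e1 : ⟪Ψ' xstar, x - xstar⟫ + ⟪Ψ' xstar, xstar - xt⟫ = ⟪Ψ' xstar, x - xt⟫ := by
      rw [← inner_add_right, sub_add_sub_cancel]
    have e2 : ⟪Ψ' xt - Ψ' xstar, x - xt⟫ = ⟪Ψ' xt, x - xt⟫ - ⟪Ψ' xstar, x - xt⟫ :=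
      inner_sub_left _ _ _
    have b1 : 0 ≤ ⟪Ψ' xstar, x - xstar⟫ := hvi x hx
    have b2 : -(‖Ψ' xstar‖ * ‖xt - xstar‖) ≤ ⟪Ψ' xstar, xstar - xt⟫ := by
      have habs := abs_real_inner_le_norm (Ψ' xstar) (xstar - xt)
      rw [norm_sub_rev xstar xt] at habs
      have := neg_abs_le ⟪Ψ' xstar, xstar - xt⟫
      linarith
    have b3 : -(L * ‖xt - xstar‖ * R) ≤ ⟪Ψ' xt - Ψ' xstar, x - xt⟫ := by
      have habs := abs_real_inner_le_norm (Ψ' xt - Ψ' xstar) (x - xt)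
      have hlips := hlip xt hxt xstar hxstar
      have hdm : ‖x - xt‖ ≤ R := hdiam x hx xt hxt
      have hmm : ‖Ψ' xt - Ψ' xstar‖ * ‖x - xt‖ ≤ L * ‖xt - xstar‖ * R :=
        mul_le_mul hlips hdm (norm_nonneg _) (by positivity)
      have := neg_abs_le ⟪Ψ' xt - Ψ' xstar, x - xt⟫
      linarith
    have hs0 : 0 ≤ Real.sqrt (2 * εt / μ) := Real.sqrt_nonneg _
    have hd0 : 0 ≤ ‖xt - xstar‖ := norm_nonneg _
    have hrem1 : ‖Ψ' xstar‖ * ‖xt - xstar‖ ≤ ‖Ψ' xstar‖ * Real.sqrt (2 * εt / μ) :=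
      mul_le_mul_of_nonneg_left hds (norm_nonneg _)
    have hrem2 : L * ‖xt - xstar‖ * R ≤ L * R * Real.sqrt (2 * εt / μ) := by
      have := mul_le_mul_of_nonneg_left hds (mul_nonneg hL.le hR)
      nlinarith [this]
    linarith [e1, e2, b1, b2, b3, hrem1, hrem2]
  · intro h0
    refine ⟨Ψ' xt, fun x hx => grad_ineq xt hxt x hx, ?_⟩
    intro x hx
    have hΔε : Ψ xt - Ψ xstar ≤ εt := happrox
    have hΔR : 2 * (Ψ xt - Ψ xstar) ≤ L * R ^ 2 := by
      have hdsc := descent xstar hxstar xt hxt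
      rw [h0] at hdsc
      simp only [inner_zero_left] at hdsc
      have hdR : ‖xt - xstar‖ ≤ R := hdiam xt hxt xstar hxstar
      have hp2 : ‖xt - xstar‖ ^ 2 ≤ R ^ 2 := pow_le_pow_left₀ (norm_nonneg _) hdR 2
      nlinarith [mul_le_mul_of_nonneg_left hp2 hL.le]
    set a : ℝ := ⟪Ψ' xt, xt - x⟫ with hadef
    have hflip : ⟪Ψ' xt, x - xt⟫ = -a := by
      rw [hadef, ← inner_neg_right]; congr 1; abel
    rw [hflip, ge_iff_le, neg_le_neg_iff]
    -- suffices : a ≤ R * sqrt (2 L Δ)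
    have hsde : Real.sqrt (2 * L * (Ψ xt - Ψ xstar)) ≤ Real.sqrt (2 * L * εt) :=
      Real.sqrt_le_sqrt (by nlinarith)
    have key : a ≤ R * Real.sqrt (2 * L * (Ψ xt - Ψ xstar)) := by
      rcases le_or_gt a 0 with ha | ha
      · have : 0 ≤ R * Real.sqrt (2 * L * (Ψ xt - Ψ xstar)) := by positivity
        linarith
      · have hc : (0:ℝ) < ‖x - xt‖ := by
          rcases eq_or_ne x xt with h | h
          · exfalso
            rw [hadef, h, sub_self, inner_zero_right] at ha
            exact lt_irrefl 0 ha
          · exact norm_sub_pos_iff.2 h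
        set c : ℝ := ‖x - xt‖ with hcdef
        have hs2 : Real.sqrt (2 * L * (Ψ xt - Ψ xstar)) ^ 2 = 2 * L * (Ψ xt - Ψ xstar) :=
          Real.sq_sqrt (by positivity)
        have hs0 : 0 ≤ Real.sqrt (2 * L * (Ψ xt - Ψ xstar)) := Real.sqrt_nonneg _
        by_cases hcase : a ≤ L * c ^ 2
        · set t : ℝ := a / (L * c ^ 2) with htdef
          have hLc : (0:ℝ) < L * c ^ 2 := by positivity
          have ht0 : 0 < t := div_pos ha hLc
          have ht1 : t ≤ 1 := (div_le_one hLc).2 hcase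
          have hta : t * (L * c ^ 2) = a := div_mul_cancel₀ a (ne_of_gt hLc)
          have hzQ : xt + t • (x - xt) ∈ Q := by
            have hrw : xt + t • (x - xt) = (1 - t) • xt + t • x := by
              rw [smul_sub, sub_smul, one_smul]; abel
            rw [hrw]
            exact hQ hxt hx (by linarith) ht0.le (by ring)
          have hdsc := descent xt hxt _ hzQ
          rw [add_sub_cancel_left] at hdsc
          rw [real_inner_smul_right] at hdsc
          have hnn : ‖t • (x - xt)‖ ^ 2 = t ^ 2 * c ^ 2 := by
            rw [norm_smul, Real.norm_of_nonneg ht0.le, mul_pow, hcdef]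
          rw [hnn] at hdsc
          have hge : Ψ xstar ≤ Ψ (xt + t • (x - xt)) := isMinOn_iff.1 hmin _ hzQ
          have hinner : ⟪Ψ' xt, x - xt⟫ = -a := hflip
          rw [hinner] at hdsc
          -- Ψ z ≤ Ψ xt - t a + L/2 t² c², Ψ z ≥ Ψ xstar ⇒ t a - L/2 t² c² ≤ Δ
          have hΔt : t * a - L / 2 * (t ^ 2 * c ^ 2) ≤ Ψ xt - Ψ xstar := by linarith
          -- with t(Lc²) = a : a² ≤ 2 L Δ c²
          have hasq : a ^ 2 ≤ 2 * L * (Ψ xt - Ψ xstar) * c ^ 2 := by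
            nlinarith [hΔt, hta, ht0]
          have hcR : c ≤ R := hdiam x hx xt hxt
          have hfin : a ^ 2 ≤ (R * Real.sqrt (2 * L * (Ψ xt - Ψ xstar))) ^ 2 := by
            have hc2 : c ^ 2 ≤ R ^ 2 := by nlinarith [hc.le, hcR]
            have hnn2 : (0:ℝ) ≤ 2 * L * (Ψ xt - Ψ xstar) := by positivity
            nlinarith [hs2, mul_le_mul_of_nonneg_left hc2 hnn2]
          calc a = Real.sqrt (a ^ 2) := (Real.sqrt_sq ha.le).symm
            _ ≤ Real.sqrt ((R * Real.sqrt (2 * L * (Ψ xt - Ψ xstar))) ^ 2) :=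
              Real.sqrt_le_sqrt hfin
            _ = R * Real.sqrt (2 * L * (Ψ xt - Ψ xstar)) := Real.sqrt_sq (by positivity)
        · push_neg at hcase
          have hdsc := descent xt hxt x hx
          rw [hflip] at hdsc
          have hge : Ψ xstar ≤ Ψ x := isMinOn_iff.1 hmin _ hx
          -- a ≤ Δ + L/2 c² < Δ + a/2 ⇒ a < 2Δ
          have ha2 : a < 2 * (Ψ xt - Ψ xstar) := by nlinarith
          have h2d : 2 * (Ψ xt - Ψ xstar) ≤ R * Real.sqrt (2 * L * (Ψ xt - Ψ xstar)) := by
            have hsq : (2 * (Ψ xt - Ψ xstar)) ^ 2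
                ≤ (R * Real.sqrt (2 * L * (Ψ xt - Ψ xstar))) ^ 2 := by
              have hh := mul_le_mul_of_nonneg_left hΔR (by linarith : (0:ℝ) ≤ 2 * (Ψ xt - Ψ xstar))
              nlinarith [hs2, hh]
            calc 2 * (Ψ xt - Ψ xstar) = Real.sqrt ((2 * (Ψ xt - Ψ xstar)) ^ 2) :=
                (Real.sqrt_sq (by linarith)).symm
              _ ≤ Real.sqrt ((R * Real.sqrt (2 * L * (Ψ xt - Ψ xstar))) ^ 2) :=
                Real.sqrt_le_sqrt hsq
              _ = R * Real.sqrt (2 * L * (Ψ xt - Ψ xstar)) := Real.sqrt_sq (by positivity)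
          linarith
    have : R * Real.sqrt (2 * L * (Ψ xt - Ψ xstar)) ≤ R * Real.sqrt (2 * L * εt) :=
      mul_le_mul_of_nonneg_left hsde hR
    linarith
end
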